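/- arXiv:1706.06839 — 2 statements merged into one kernel-verified Lean document; each statement's English description precedes it below -/
import Mathlib

section
/- Let $(X,d)$ be a finite metric space and suppose $w_1, w_2 : X \to \mathbb{R}$ are both weight functions, i.e. $\sum_{y \in X} e^{-d(x,y)} w_i(y) = 1$ for all $x \in X$ and $i = 1,2$. Then $\sum_{x \in X} w_1(x) = \sum_{x \in X} w_2(x)$. -/
open scoped BigOperators

/-- On a finite metric space, any two weight functions
(functions `w` with `∑ y, exp (-dist x y) * w y = 1` for all `x`) have the
same total sum; i.e. the magnitude is well-defined. -/
theorem magnitude_well_defined {X : Type*} [Fintype X] [MetricSpace X]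
    (w₁ w₂ : X → ℝ)
    (h₁ : ∀ x : X, ∑ y : X, Real.exp (-dist x y) * w₁ y = 1)
    (h₂ : ∀ x : X, ∑ y : X, Real.exp (-dist x y) * w₂ y = 1) :
    ∑ x : X, w₁ x = ∑ x : X, w₂ x := by
  calc ∑ x : X, w₁ x
      = ∑ x : X, w₁ x * ∑ y : X, Real.exp (-dist x y) * w₂ y := by
        simp [h₂]
    _ = ∑ y : X, w₂ y * ∑ x : X, Real.exp (-dist y x) * w₁ x := by
        simp_rw [Finset.mul_sum]
        rw [Finset.sum_comm]
        refine Finset.sum_congr rfl fun y _ => Finset.sum_congr rfl fun x _ => ?_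
        rw [dist_comm]; ring
    _ = ∑ y : X, w₂ y := by simp [h₁]
end

section
/- The equation $\sinh(w) = w$ has infinitely many solutions $w \in \mathbb{C}$, and any sequence $(w_k)$ of distinct solutions satisfies $|\mathrm{Im}(w_k)| \to \infty$; moreover for solutions with large imaginary part, $\mathrm{Re}(w_k) = \log(2|\mathrm{Im}(w_k)|) + o(1)$ or $\mathrm{Re}(w_k) = -\log(2|\mathrm{Im}(w_k)|) + o(1)$. The only real solution is $w = 0$. -/
/-!
Write `w = x + y i`. Comparing moduli in `sinh w = w` gives `sinh² x + sin² y = x² + y²`, hence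
`sinh |x| = |y| + O(|x| + 1)`, i.e. `exp |x| = 2 |y| + O(√|y|)`. This yields the asymptotics, and
it confines the solutions in a horizontal strip to a compact set, where the zeros of the
nonconstant entire function `sinh w - w` are finitely many.

For existence, follow the branch `cos y = x / sinh x`, `y ∈ [2πn, 2πn + π]`, of the curve
`re (sinh w) = re w`. Along it `cosh x * sin y - y` is negative at `x = 1` (as `cosh 1 < 2π`) and
at least `sinh x - x - (2πn + π) ≥ 0` for large `x`, so the intermediate value theorem gives a
solution with `im w ≥ 2πn` for every `n ≥ 1`.
-/

open Filter Real Topology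

namespace Complex

theorem sinh_re (z : ℂ) : (sinh z).re = Real.sinh z.re * Real.cos z.im := by
  rw [← re_add_im z, sinh_add, sinh_mul_I, cosh_mul_I]
  simp [sinh_ofReal_re, cos_ofReal_re]

theorem sinh_im (z : ℂ) : (sinh z).im = Real.cosh z.re * Real.sin z.im := by
  rw [← re_add_im z, sinh_add, sinh_mul_I, cosh_mul_I]
  simp [cosh_ofReal_re, sin_ofReal_re]

end Complex

theorem Real.abs_log_sub_log_le {a b δ : ℝ} (ha : 0 < a) (hb : 0 < b)
    (hab : a ≤ b * (1 + δ)) (hba : b ≤ a * (1 + δ)) : |log a - log b| ≤ δ := by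
  have key : ∀ {x y : ℝ}, 0 < x → 0 < y → x ≤ y * (1 + δ) → log x - log y ≤ δ := by
    intro x y hx hy hxy
    rw [← log_div hx.ne' hy.ne']
    have : x / y ≤ 1 + δ := (div_le_iff₀' hy).2 (by linarith)
    linarith [log_le_sub_one_of_pos (div_pos hx hy)]
  exact abs_sub_le_iff.2 ⟨key ha hb hab, key hb ha hba⟩

section SinhEqSelf

variable {w : ℂ}

/-- `|sinh w|² = |w|²`, where `|sinh w|² = sinh² (re w) + sin² (im w)`. -/
theorem sinh_sq_abs_re_add_sin_sq_im (h : Complex.sinh w = w) :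
    sinh |w.re| ^ 2 + sin w.im ^ 2 = |w.re| ^ 2 + |w.im| ^ 2 := by
  have hre : sinh w.re * cos w.im = w.re := by rw [← Complex.sinh_re, h]
  have him : cosh w.re * sin w.im = w.im := by rw [← Complex.sinh_im, h]
  rw [← abs_sinh, sq_abs, sq_abs, sq_abs]
  linear_combination (sinh w.re * cos w.im + w.re) * hre + (cosh w.re * sin w.im + w.im) * him
    - sin w.im ^ 2 * cosh_sq w.re - sinh w.re ^ 2 * sin_sq_add_cos_sq w.im

theorem exp_abs_re_le (h : Complex.sinh w = w) :
    exp |w.re| ≤ 2 * |w.im| + 2 * |w.re| + 1 := by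
  have hid := sinh_sq_abs_re_add_sin_sq_im h
  have ht := abs_nonneg w.re
  have hs := abs_nonneg w.im
  have hsinh : sinh |w.re| ≤ |w.im| + |w.re| := by
    nlinarith [sq_nonneg (sin w.im), sinh_nonneg_iff.2 ht]
  have hexp : exp (-|w.re|) ≤ 1 := exp_le_one_iff.2 (by linarith)
  linarith [sinh_eq |w.re|]

theorem two_mul_abs_im_sub_two_le_exp_abs_re (h : Complex.sinh w = w) :
    2 * |w.im| - 2 ≤ exp |w.re| := by
  rcases lt_or_ge |w.im| 1 with hs | hs
  · linarith [exp_pos |w.re|]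
  have hid := sinh_sq_abs_re_add_sin_sq_im h
  have hsinh : |w.im| - 1 ≤ sinh |w.re| := by
    nlinarith [sin_sq_le_one w.im, sq_nonneg |w.re|, sinh_nonneg_iff.2 (abs_nonneg w.re)]
  linarith [sinh_eq |w.re|, exp_pos (-|w.re|)]

theorem abs_re_sq_le (h : Complex.sinh w = w) : |w.re| ^ 2 ≤ 8 * |w.im| + 16 := by
  have hexp := quadratic_le_exp_of_nonneg (abs_nonneg w.re)
  have := exp_abs_re_le h
  nlinarith [abs_nonneg w.re, abs_nonneg w.im]

theorem abs_re_le (h : Complex.sinh w = w) : |w.re| ≤ 8 * |w.im| + 16 := by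
  nlinarith [abs_re_sq_le h, abs_nonneg w.im]

theorem abs_abs_re_sub_log_le (h : Complex.sinh w = w) (hs : 4 ≤ |w.im|) :
    |(|w.re| - log (2 * |w.im|))| ≤ 5 / √|w.im| := by
  set r := √|w.im|
  have hr2 : r ^ 2 = |w.im| := sq_sqrt (abs_nonneg _)
  have hr : 2 ≤ r := le_sqrt_of_sq_le (by linarith)
  have hδ : 5 / r * r = 5 := div_mul_cancel₀ 5 (by positivity)
  have hδ_pos : 0 < 5 / r := by positivity
  have hre : |w.re| ≤ 4 * r := by
    nlinarith [abs_re_sq_le h, abs_nonneg w.re]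
  rw [← log_exp |w.re|]
  apply abs_log_sub_log_le (exp_pos _) (by positivity)
  · nlinarith [exp_abs_re_le h]
  · nlinarith [two_mul_abs_im_sub_two_le_exp_abs_re h, exp_pos |w.re|]

theorem exists_forall_abs_abs_re_sub_log_lt {ε : ℝ} (hε : 0 < ε) :
    ∃ M : ℝ, ∀ w : ℂ, Complex.sinh w = w → M ≤ |w.im| →
      |(|w.re| - log (2 * |w.im|))| < ε := by
  have hsmall : ∀ᶠ s in atTop, 5 / √s < ε ∧ 4 ≤ s :=
    ((tendsto_sqrt_atTop.const_div_atTop 5).eventually (gt_mem_nhds hε)).and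
      (eventually_ge_atTop 4)
  obtain ⟨M, hM⟩ := eventually_atTop.1 hsmall
  exact ⟨M, fun w h hw ↦ (abs_abs_re_sub_log_le h (hM _ hw).2).trans_lt (hM _ hw).1⟩

end SinhEqSelf

theorem AnalyticOnNhd.finite_inter_preimage_zero {𝕜 E : Type*} [NontriviallyNormedField 𝕜]
    [NormedAddCommGroup E] [NormedSpace 𝕜 E] [ConnectedSpace 𝕜] {f : 𝕜 → E} {x : 𝕜}
    {K : Set 𝕜} (hf : AnalyticOnNhd 𝕜 f Set.univ) (hx : f x ≠ 0) (hK : IsCompact K) :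
    (K ∩ f ⁻¹' {0}).Finite := by
  have := hK.finite_sdiff_of_mem_codiscreteWithin
    (codiscreteWithin_mono (Set.subset_univ K) (hf.preimage_zero_mem_codiscrete hx))
  rwa [Set.preimage_compl, Set.sdiff_compl] at this

theorem finite_setOf_sinh_eq_self_abs_im_le (C : ℝ) :
    {w : ℂ | Complex.sinh w = w ∧ |w.im| ≤ C}.Finite := by
  have hf : AnalyticOnNhd ℂ (fun z ↦ Complex.sinh z - z) Set.univ :=
    Complex.analyticOnNhd_sinh.sub analyticOnNhd_id
  have h2 : Complex.sinh 2 - 2 ≠ 0 := by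
    rw [sub_ne_zero, ← Complex.ofReal_ofNat, ← Complex.ofReal_sinh, Ne, Complex.ofReal_inj]
    exact (self_lt_sinh_iff.2 two_pos).ne'
  refine (hf.finite_inter_preimage_zero h2 (isCompact_closedBall 0 (9 * C + 16))).subset ?_
  rintro w ⟨h, hC⟩
  refine ⟨?_, by simp [h]⟩
  rw [mem_closedBall_zero_iff]
  linarith [Complex.norm_le_abs_re_add_abs_im w, abs_re_le h]

theorem tendsto_abs_im_of_sinh_eq_self {w : ℕ → ℂ} (hw : ∀ k, Complex.sinh (w k) = w k)
    (hinj : Function.Injective w) : Tendsto (fun k ↦ |(w k).im|) atTop atTop := by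
  refine tendsto_atTop.2 fun C ↦ ?_
  rw [← Nat.cofinite_eq_atTop, eventually_cofinite]
  refine ((finite_setOf_sinh_eq_self_abs_im_le C).preimage hinj.injOn).subset fun k hk ↦ ?_
  exact ⟨hw k, (not_le.1 hk).le⟩

/-- The `n`-th branch `y = reEqCurve n x` of the curve `sinh x * cos y = x`, `x > 0`, on which
`re (sinh w) = re w` holds for `w = x + y i`. -/
noncomputable def reEqCurve (n : ℕ) (x : ℝ) : ℝ := arccos (x / sinh x) + n * (2 * π)

theorem sinh_eq_self_of_cosh_mul_sin_reEqCurve {n : ℕ} {x : ℝ} (hx : 0 < x)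
    (h : cosh x * sin (reEqCurve n x) = reEqCurve n x) :
    Complex.sinh ⟨x, reEqCurve n x⟩ = ⟨x, reEqCurve n x⟩ := by
  have hsinh : 0 < sinh x := sinh_pos_iff.2 hx
  have hratio : x / sinh x ≤ 1 := (div_le_one hsinh).2 (self_le_sinh_iff.2 hx.le)
  apply Complex.ext
  · rw [Complex.sinh_re, reEqCurve, cos_add_nat_mul_two_pi,
      cos_arccos (by linarith [div_pos hx hsinh]) hratio]
    exact mul_div_cancel₀ x hsinh.ne'
  · rw [Complex.sinh_im]
    exact h

theorem exists_le_sinh_sub_self (K : ℝ) : ∃ b : ℝ, 1 ≤ b ∧ K ≤ sinh b - b := by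
  refine ⟨2 * |K| + 2, by linarith [abs_nonneg K], ?_⟩
  have hexp := quadratic_le_exp_of_nonneg (by positivity : (0 : ℝ) ≤ 2 * |K| + 2)
  have hexp_neg : exp (-(2 * |K| + 2)) ≤ 1 := exp_le_one_iff.2 (by linarith [abs_nonneg K])
  nlinarith [sinh_eq (2 * |K| + 2), le_abs_self K, abs_nonneg K]

theorem exists_sinh_eq_self_im_ge {n : ℕ} (hn : 1 ≤ n) :
    ∃ w : ℂ, Complex.sinh w = w ∧ n * (2 * π) ≤ w.im := by
  set g : ℝ → ℝ := fun x ↦ cosh x * sin (reEqCurve n x) - reEqCurve n x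
  have hcurve_ge : ∀ x, n * (2 * π) ≤ reEqCurve n x := fun x ↦
    le_add_of_nonneg_left (arccos_nonneg _)
  have hcurve_le : ∀ x, reEqCurve n x ≤ π + n * (2 * π) := fun x ↦
    add_le_add_left (arccos_le_pi _) _
  obtain ⟨b, hb1, hb⟩ := exists_le_sinh_sub_self (π + n * (2 * π))
  have hg1 : g 1 ≤ 0 := by
    have hcosh : cosh 1 < 2 * π := by
      linarith [cosh_eq 1, exp_one_lt_d9, exp_le_one_iff.2 (by norm_num : (-1 : ℝ) ≤ 0),
        pi_gt_three]
    have hn' : (1 : ℝ) ≤ n := by exact_mod_cast hn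
    nlinarith [sin_le_one (reEqCurve n 1), cosh_pos 1, hcurve_ge 1, pi_pos]
  have hgb : 0 ≤ g b := by
    have hsinh : 0 < sinh b := sinh_pos_iff.2 (by linarith)
    set u := b / sinh b
    have hu0 : 0 ≤ u := div_nonneg (by linarith) hsinh.le
    have hu1 : u ≤ 1 := (div_le_one hsinh).2 (self_le_sinh_iff.2 (by linarith))
    have hsin : 1 - u ≤ sin (reEqCurve n b) := by
      rw [reEqCurve, sin_add_nat_mul_two_pi, sin_arccos]
      exact le_sqrt_of_sq_le (by nlinarith)
    have hcosh : sinh b ≤ cosh b := by linarith [cosh_sub_sinh b, exp_pos (-b)]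
    have hsinh_u : sinh b * u = b := mul_div_cancel₀ b hsinh.ne'
    nlinarith [hcurve_le b]
  have hcont : ContinuousOn g (Set.Icc 1 b) := by
    have hsinh : ∀ x ∈ Set.Icc 1 b, sinh x ≠ 0 := fun x hx ↦
      (sinh_pos_iff.2 (by linarith [hx.1])).ne'
    unfold g reEqCurve
    fun_prop (disch := assumption)
  obtain ⟨x, hx, hgx⟩ := intermediate_value_Icc hb1 hcont ⟨hg1, hgb⟩
  have hx0 : 0 < x := by linarith [hx.1]
  exact ⟨_, sinh_eq_self_of_cosh_mul_sin_reEqCurve hx0 (sub_eq_zero.1 hgx), hcurve_ge x⟩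

theorem setOf_sinh_eq_self_infinite : {w : ℂ | Complex.sinh w = w}.Infinite := by
  intro hfin
  obtain ⟨B, hB⟩ := (hfin.image Complex.im).bddAbove
  obtain ⟨n, hn⟩ := exists_nat_gt B
  obtain ⟨w, hw, him⟩ := exists_sinh_eq_self_im_ge (Nat.le_add_left 1 n)
  have : ((n + 1 : ℕ) : ℝ) ≤ (n + 1 : ℕ) * (2 * π) :=
    le_mul_of_one_le_right (Nat.cast_nonneg _) (by linarith [pi_gt_three])
  push_cast at this him
  linarith [hB ⟨w, hw, rfl⟩]

/-- `sinh w = w` has infinitely many complex solutions; any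
injective sequence of solutions has `|Im| → ∞`; solutions with large
imaginary part satisfy `Re = ± log(2|Im|) + o(1)`; and the only real
solution is `w = 0`. -/
theorem sinh_eq_self_solutions :
    {w : ℂ | Complex.sinh w = w}.Infinite ∧
    (∀ w : ℕ → ℂ, (∀ k, Complex.sinh (w k) = w k) → Function.Injective w →
      Tendsto (fun k => |(w k).im|) atTop atTop) ∧
    (∀ ε : ℝ, 0 < ε → ∃ M : ℝ, ∀ w : ℂ, Complex.sinh w = w →
      M ≤ |w.im| → |(|w.re| - Real.log (2 * |w.im|))| < ε) ∧
    (∀ x : ℝ, Real.sinh x = x → x = 0) :=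
  ⟨setOf_sinh_eq_self_infinite, fun _ ↦ tendsto_abs_im_of_sinh_eq_self,
    fun _ ↦ exists_forall_abs_abs_re_sub_log_lt,
    fun _ hx ↦ le_antisymm (sinh_le_self_iff.1 hx.le) (self_le_sinh_iff.1 hx.ge)⟩
end
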